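/- If A is a closed ∀⁺ type of system F that is provable (i.e. there exists a closed λ-term t with ⊢_F t : A), then A is a data type: |A| ≠ ∅ and every λ-term in |A| β-reduces to a closed term. -/
import Mathlib


/-!
Common development: pure λ-calculus in de Bruijn notation, β-reduction,
weak head reduction, types of system F (with type constants), the typing
systems F, F₀ (F without (∀e)) and the simple system S, saturated sets and
interpretations, and the notions of input / output / data types, following
Farkh-Nour, "Les types de données syntaxiques du système F".
-/

namespace FarkhNour

/-- Pure λ-terms, in de Bruijn notation. -/
inductive Trm : Type
  | var : ℕ → Trm
  | app : Trm → Trm → Trm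
  | lam : Trm → Trm

/-- Lift (shift) by `d` the free variables of a term, starting at index `k`. -/
def liftTrm (d : ℕ) : ℕ → Trm → Trm
  | k, .var n => if n < k then .var n else .var (n + d)
  | k, .app a b => .app (liftTrm d k a) (liftTrm d k b)
  | k, .lam a => .lam (liftTrm d (k + 1) a)

/-- β-substitution `t[u/k]` (the binder for `k` is consumed: variables above `k`
are decremented), as used in the β-reduction rule. -/
def substTrm : Trm → ℕ → Trm → Trm
  | .var n, k, u => if n < k then .var n else if n = k then liftTrm k 0 u else .var (n - 1)
  | .app a b, k, u => .app (substTrm a k u) (substTrm b k u)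
  | .lam a, k, u => .lam (substTrm a (k + 1) u)

/-- Named-style capture-avoiding substitution `t[u/x]` of the term `u` for the
free variable `x` of `t` : the other free variables are left unchanged. -/
def replaceVar : Trm → ℕ → Trm → Trm
  | .var n, k, u => if n = k then u else .var n
  | .app a b, k, u => .app (replaceVar a k u) (replaceVar b k u)
  | .lam a, k, u => .lam (replaceVar a (k + 1) (liftTrm 1 0 u))

/-- Lifting of a parallel substitution under a binder. -/
def liftSub (σ : ℕ → Trm) : ℕ → Trm
  | 0 => .var 0
  | n + 1 => liftTrm 1 0 (σ n)

/-- Simultaneous (parallel) capture-avoiding substitution. -/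
def msubst (σ : ℕ → Trm) : Trm → Trm
  | .var n => σ n
  | .app a b => .app (msubst σ a) (msubst σ b)
  | .lam a => .lam (msubst (liftSub σ) a)

/-- One step of β-reduction. -/
inductive BetaStep : Trm → Trm → Prop
  | beta (t u : Trm) : BetaStep (.app (.lam t) u) (substTrm t 0 u)
  | appL {t t' : Trm} (u : Trm) : BetaStep t t' → BetaStep (.app t u) (.app t' u)
  | appR (t : Trm) {u u' : Trm} : BetaStep u u' → BetaStep (.app t u) (.app t u')
  | lam {t t' : Trm} : BetaStep t t' → BetaStep (.lam t) (.lam t')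

/-- Many-step β-reduction `t →β t'`. -/
def BetaRed : Trm → Trm → Prop := Relation.ReflTransGen BetaStep

/-- β-equivalence `t ≃β t'`. -/
def BetaEq : Trm → Trm → Prop := Relation.EqvGen BetaStep

/-- A term is normal iff no β-reduction step applies to it. -/
def IsNormal (t : Trm) : Prop := ∀ u, ¬ BetaStep t u

/-- `FreeIn k t` : the variable (de Bruijn index) `k` occurs free in `t`. -/
def FreeIn : ℕ → Trm → Prop
  | k, .var n => n = k
  | k, .app a b => FreeIn k a ∨ FreeIn k b
  | k, .lam a => FreeIn (k + 1) a

/-- A closed term. -/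
def TrmClosed (t : Trm) : Prop := ∀ k, ¬ FreeIn k t

/-- One step of weak head reduction. -/
inductive WHStep : Trm → Trm → Prop
  | beta (t u : Trm) : WHStep (.app (.lam t) u) (substTrm t 0 u)
  | app {t t' : Trm} (u : Trm) : WHStep t t' → WHStep (.app t u) (.app t' u)

/-- Weak head reduction `t ≻_f t'`. -/
def WHRed : Trm → Trm → Prop := Relation.ReflTransGen WHStep

/-- Types of system F, in de Bruijn notation, with type constants
(the constant `0` is the distinguished constant `O`, the constant `1` is `⊥`). -/
inductive Ty : Type
  | var : ℕ → Ty
  | const : ℕ → Ty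
  | arr : Ty → Ty → Ty
  | all : Ty → Ty

/-- The distinguished type constant `O`. -/
def tyO : Ty := .const 0

/-- The distinguished type constant `⊥`. -/
def tyBot : Ty := .const 1

/-- Lift (shift) by `d` the free type variables, starting at index `k`. -/
def liftTy (d : ℕ) : ℕ → Ty → Ty
  | k, .var n => if n < k then .var n else .var (n + d)
  | _, .const c => .const c
  | k, .arr a b => .arr (liftTy d k a) (liftTy d k b)
  | k, .all a => .all (liftTy d (k + 1) a)

/-- Capture-avoiding type substitution `A[G/k]`. -/
def substTy : Ty → ℕ → Ty → Ty
  | .var n, k, G => if n < k then .var n else if n = k then liftTy k 0 G else .var (n - 1)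
  | .const c, _, _ => .const c
  | .arr a b, k, G => .arr (substTy a k G) (substTy b k G)
  | .all a, k, G => .all (substTy a (k + 1) G)

/-- `TyFreeIn k A` : the type variable `k` occurs free in `A`. -/
def TyFreeIn : ℕ → Ty → Prop
  | k, .var n => n = k
  | _, .const _ => False
  | k, .arr a b => TyFreeIn k a ∨ TyFreeIn k b
  | k, .all a => TyFreeIn (k + 1) a

/-- Boolean version of `TyFreeIn`. -/
def tyFreeInB : ℕ → Ty → Bool
  | k, .var n => n == k
  | _, .const _ => false
  | k, .arr a b => tyFreeInB k a || tyFreeInB k b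
  | k, .all a => tyFreeInB (k + 1) a

/-- A closed type. -/
def TyClosed (A : Ty) : Prop := ∀ k, ¬ TyFreeIn k A

/-- `ContainsConst c A` : the type constant `c` occurs in `A`. -/
def ContainsConst : ℕ → Ty → Prop
  | _, .var _ => False
  | c, .const c' => c' = c
  | c, .arr a b => ContainsConst c a ∨ ContainsConst c b
  | c, .all a => ContainsConst c a

/-- The typing judgment `Γ ⊢_F t : A` of system F, with rules
(ax), (→i), (→e), (∀i), (∀e). -/
inductive TypF : List Ty → Trm → Ty → Prop
  | var (Γ : List Ty) (n : ℕ) (A : Ty) : Γ[n]? = some A → TypF Γ (.var n) A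
  | abs {Γ : List Ty} {t : Trm} {B C : Ty} :
      TypF (B :: Γ) t C → TypF Γ (.lam t) (.arr B C)
  | app {Γ : List Ty} {u v : Trm} {B C : Ty} :
      TypF Γ u (.arr B C) → TypF Γ v B → TypF Γ (.app u v) C
  | allI {Γ : List Ty} {t : Trm} {A : Ty} :
      TypF (Γ.map (liftTy 1 0)) t A → TypF Γ t (.all A)
  | allE {Γ : List Ty} {t : Trm} {A : Ty} (G : Ty) :
      TypF Γ t (.all A) → TypF Γ t (substTy A 0 G)

/-- The typing judgment `Γ ⊢_{F₀} t : A` of system F₀, i.e. system F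
without the rule (∀e). -/
inductive TypF0 : List Ty → Trm → Ty → Prop
  | var (Γ : List Ty) (n : ℕ) (A : Ty) : Γ[n]? = some A → TypF0 Γ (.var n) A
  | abs {Γ : List Ty} {t : Trm} {B C : Ty} :
      TypF0 (B :: Γ) t C → TypF0 Γ (.lam t) (.arr B C)
  | app {Γ : List Ty} {u v : Trm} {B C : Ty} :
      TypF0 Γ u (.arr B C) → TypF0 Γ v B → TypF0 Γ (.app u v) C
  | allI {Γ : List Ty} {t : Trm} {A : Ty} :
      TypF0 (Γ.map (liftTy 1 0)) t A → TypF0 Γ t (.all A)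

/-- The typing judgment `Γ ⊢_S t : A` of the simple type system S,
with rules (ax), (→i), (→e) only. -/
inductive TypS : List Ty → Trm → Ty → Prop
  | var (Γ : List Ty) (n : ℕ) (A : Ty) : Γ[n]? = some A → TypS Γ (.var n) A
  | abs {Γ : List Ty} {t : Trm} {B C : Ty} :
      TypS (B :: Γ) t C → TypS Γ (.lam t) (.arr B C)
  | app {Γ : List Ty} {u v : Trm} {B C : Ty} :
      TypS Γ u (.arr B C) → TypS Γ v B → TypS Γ (.app u v) C

/-- Quantifier-free types (types of the simple type system S). -/
def QFree : Ty → Prop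
  | .var _ => True
  | .const _ => True
  | .arr a b => QFree a ∧ QFree b
  | .all _ => False

/-- An input type : a closed type all of whose normal inhabitants are
typable in system F₀. -/
def IsInputType (E : Ty) : Prop :=
  TyClosed E ∧ ∀ t : Trm, IsNormal t → TypF [] t E → TypF0 [] t E

/-- An output type : a closed type `S` not containing the constant `O` such
that for every normal term `t`, if `α : O ⊢_F t : S` then `α ∉ Fv(t)`. -/
def IsOutputType (S : Ty) : Prop :=
  TyClosed S ∧ ¬ ContainsConst 0 S ∧
    ∀ t : Trm, IsNormal t → TypF [tyO] t S → ¬ FreeIn 0 t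

/-- A syntactical data type : a closed type which is both input and output. -/
def IsSyntacticalDataType (D : Ty) : Prop := IsInputType D ∧ IsOutputType D

mutual
  /-- The ∀⁺ types (positive quantifiers). -/
  inductive PosTy : Ty → Prop
    | var (n : ℕ) : PosTy (.var n)
    | arr {B A : Ty} : NegTy B → PosTy A → PosTy (.arr B A)
    | all {A : Ty} : PosTy A → TyFreeIn 0 A → PosTy (.all A)
  /-- The ∀⁻ types (negative quantifiers). -/
  inductive NegTy : Ty → Prop
    | var (n : ℕ) : NegTy (.var n)
    | arr {B A : Ty} : PosTy B → NegTy A → NegTy (.arr B A)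
end

/-- `EndsInConst c A` : the type `A` ends in the type constant `c`. -/
inductive EndsInConst : ℕ → Ty → Prop
  | base (c : ℕ) : EndsInConst c (.const c)
  | arr {c : ℕ} {A : Ty} (B : Ty) : EndsInConst c A → EndsInConst c (.arr B A)
  | all {c : ℕ} {A : Ty} : EndsInConst c A → EndsInConst c (.all A)

/-- `EndsInVar k A` : the type `A` ends in the type variable `k`
(crossing a quantifier ∀X with X ≠ the variable is allowed). -/
inductive EndsInVar : ℕ → Ty → Prop
  | base (k : ℕ) : EndsInVar k (.var k)
  | arr {k : ℕ} {A : Ty} (B : Ty) : EndsInVar k A → EndsInVar k (.arr B A)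
  | all {k : ℕ} {A : Ty} : EndsInVar (k + 1) A → EndsInVar k (.all A)

/-- The side condition of the restricted rule (∀e)_F : the body `A` of `∀X A`
(the variable X having index `k`) is of the form
`∀X₀(A₁ → ∀X₁(A₂ → … → ∀X_{n-1}(A_n → ∀X_n Y)…))` with `Y = X` or one of the
`A_i` ending in `X`. -/
inductive FFForm : ℕ → Ty → Prop
  | base (k : ℕ) : FFForm k (.var k)
  | all {k : ℕ} {A : Ty} : FFForm (k + 1) A → FFForm k (.all A)
  | arrTail {k : ℕ} {C : Ty} (B : Ty) : FFForm k C → FFForm k (.arr B C)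
  | arrHit {k : ℕ} {B C : Ty} : EndsInVar k B → (∃ j, EndsInVar j C) →
      FFForm k (.arr B C)

/-- The typing judgment of system F_F : system F where the rule (∀e) is
replaced by the restricted rule (∀e)_F. -/
inductive TypFF : List Ty → Trm → Ty → Prop
  | var (Γ : List Ty) (n : ℕ) (A : Ty) : Γ[n]? = some A → TypFF Γ (.var n) A
  | abs {Γ : List Ty} {t : Trm} {B C : Ty} :
      TypFF (B :: Γ) t C → TypFF Γ (.lam t) (.arr B C)
  | app {Γ : List Ty} {u v : Trm} {B C : Ty} :
      TypFF Γ u (.arr B C) → TypFF Γ v B → TypFF Γ (.app u v) C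
  | allI {Γ : List Ty} {t : Trm} {A : Ty} :
      TypFF (Γ.map (liftTy 1 0)) t A → TypFF Γ t (.all A)
  | allE {Γ : List Ty} {t : Trm} {A : Ty} (G : Ty) :
      FFForm 0 A → TypFF Γ t (.all A) → TypFF Γ t (substTy A 0 G)

/-- An output type of system F_F. -/
def IsOutputTypeFF (S : Ty) : Prop :=
  TyClosed S ∧ ¬ ContainsConst 0 S ∧
    ∀ t : Trm, IsNormal t → TypFF [tyO] t S → ¬ FreeIn 0 t

/-- Saturated sets of λ-terms. -/
def Saturated (G : Set Trm) : Prop := ∀ t u : Trm, WHRed t u → u ∈ G → t ∈ G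

/-- `G → G'` on sets of λ-terms. -/
def SetArr (G G' : Set Trm) : Set Trm := {u : Trm | ∀ t ∈ G, Trm.app u t ∈ G'}

/-- Extension of an interpretation by a set for the (de Bruijn) variable 0. -/
def consEnv (G : Set Trm) (I : ℕ → Set Trm) : ℕ → Set Trm
  | 0 => G
  | n + 1 => I n

/-- The value `|A|_I` of a type in an interpretation (`C` interprets the
type constants, `I` the type variables). -/
def TyVal (C : ℕ → Set Trm) : Ty → (ℕ → Set Trm) → Set Trm
  | .var n, I => I n
  | .const c, _ => C c
  | .arr a b, I => SetArr (TyVal C a I) (TyVal C b I)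
  | .all a, I => {t : Trm | ∀ G : Set Trm, Saturated G → t ∈ TyVal C a (consEnv G I)}

/-- `|A|` : the intersection of the values of `A` under all interpretations
by saturated sets. -/
def TyGlobal (A : Ty) : Set Trm :=
  {t : Trm | ∀ C I : ℕ → Set Trm, (∀ c, Saturated (C c)) → (∀ n, Saturated (I n)) →
    t ∈ TyVal C A I}

/-- A data type in Krivine's sense : a closed type `A` with `|A| ≠ ∅` such that
every term of `|A|` β-reduces to a closed term. -/
def IsDataType (A : Ty) : Prop :=
  TyClosed A ∧ TyGlobal A ≠ ∅ ∧
    ∀ t ∈ TyGlobal A, ∃ t' : Trm, BetaRed t t' ∧ TrmClosed t'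

/-- The product type `A ∧ B = ∀X((A → (B → X)) → X)` (X fresh). -/
def tyAnd (A B : Ty) : Ty :=
  .all (.arr (.arr (liftTy 1 0 A) (.arr (liftTy 1 0 B) (.var 0))) (.var 0))

/-- The disjoint sum type `A ∨ B = ∀X((A → X) → ((B → X) → X))` (X fresh). -/
def tyOr (A B : Ty) : Ty :=
  .all (.arr (.arr (liftTy 1 0 A) (.var 0))
    (.arr (.arr (liftTy 1 0 B) (.var 0)) (.var 0)))

/-- The type `LA = ∀X(X → ((A → (X → X)) → X))` of lists of objects of `A`. -/
def tyList (A : Ty) : Ty :=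
  .all (.arr (.var 0)
    (.arr (.arr (liftTy 1 0 A) (.arr (.var 0) (.var 0))) (.var 0)))

/-- Negation `¬A = A → ⊥`. -/
def tyNeg (A : Ty) : Ty := .arr A tyBot

/-- The Gödel translation `A*` : every atomic subformula `R` is replaced
by `¬R`. -/
def godel : Ty → Ty
  | .var n => .arr (.var n) tyBot
  | .const c => .arr (.const c) tyBot
  | .arr a b => .arr (godel a) (godel b)
  | .all a => .all (godel a)

/-- `T` is a storage operator for the pair of types `(E, S)`. -/
def IsStorageOpPair (T : Trm) (E S : Ty) : Prop :=
  TrmClosed T ∧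
    ∀ t : Trm, TypF [] t E →
      ∃ τ τ' : Trm, BetaEq τ τ' ∧ TypF [] τ' S ∧
        ∀ θ : Trm, BetaEq θ t →
          ∀ f : ℕ, ¬ FreeIn f θ → ¬ FreeIn f τ →
            ∃ σ : ℕ → Trm,
              WHRed (.app (.app T θ) (.var f)) (.app (.var f) (msubst σ τ))

/-- `T` is a storage operator for the type `D`. -/
def IsStorageOp (T : Trm) (D : Ty) : Prop := IsStorageOpPair T D D

/-- The term `λx₁…λxₙ.α` (n-fold abstraction over the free variable `α`). -/
def nlam (n a : ℕ) : Trm := Trm.lam^[n] (Trm.var (a + n))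

/-- The term `p_n = λx₁…λxₙλx.x`. -/
def pTrm (n : ℕ) : Trm := Trm.lam^[n] (Trm.lam (Trm.var 0))

/-- `B₁ → … → B_n → A`. -/
def mkArr (Bs : List Ty) (A : Ty) : Ty := Bs.foldr Ty.arr A

/-- The length `Lg(E)` of a type : the number of occurrences of `→` in it. -/
def Lg : Ty → ℕ
  | .var _ => 0
  | .const _ => 0
  | .arr a b => Lg a + Lg b + 1
  | .all a => Lg a

/-- `SubtypeOf A E` : `A` is a subtype (subformula) of `E`. -/
inductive SubtypeOf : Ty → Ty → Prop
  | refl (A : Ty) : SubtypeOf A A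
  | arrL {A B C : Ty} : SubtypeOf A B → SubtypeOf A (.arr B C)
  | arrR {A B C : Ty} : SubtypeOf A C → SubtypeOf A (.arr B C)
  | all {A B : Ty} : SubtypeOf A B → SubtypeOf A (.all B)

/-- `InAppPos k t` : the variable `k` occurs in application (function)
position in `t`, i.e. some subterm of `t` is of the form `(k)u`. -/
def InAppPos : ℕ → Trm → Prop
  | _, .var _ => False
  | k, .app u v => u = .var k ∨ InAppPos k u ∨ InAppPos k v
  | k, .lam u => InAppPos (k + 1) u

/-- The simple translation `A^s` : `X^s = X`, `(B → C)^s = B^s → C^s`,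
`(∀X B)^s = B^s` (the variables freed by erasing the quantifiers are collapsed
onto the type variable `0`). `d` counts the erased quantifiers. -/
def eraseTyAux : ℕ → Ty → Ty
  | d, .var n => .var (n - d)
  | _, .const c => .const c
  | d, .arr a b => .arr (eraseTyAux d a) (eraseTyAux d b)
  | d, .all a => eraseTyAux (d + 1) a

/-- The simple translation `A^s`. -/
def eraseTy : Ty → Ty := eraseTyAux 0

/-- The identity term `λx.x`. -/
def idTrm : Trm := .lam (.var 0)

/-- The boolean `𝟙 = λxλy.x`. -/
def oneTrm : Trm := .lam (.lam (.var 1))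

/-- The pair of λ-terms `(T_F, T'_F)` associated with a type `F` (the
distinguished variable `X` having de Bruijn index `k`; the term variable `α`
is the free term variable `0`):
`T_F = T'_F = λx.x` if `X ∉ Fv(F)`;
`T_X = λxλβλg.(g)xα`, `T'_X = λx.(x)α𝟙`;
`T_{C→D} = λxλy.(T_D)(x)(T'_C)y`, `T'_{C→D} = λxλy.(T'_D)(x)(T_C)y`;
`T_{∀Y B} = λx.(T_B)x`, `T'_{∀Y B} = λx.(T'_B)x`. -/
def TTpair : ℕ → Ty → Trm × Trm
  | k, .var n =>
      if n = k then
        (.lam (.lam (.lam (.app (.app (.var 0) (.var 2)) (.var 3)))),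
         .lam (.app (.app (.var 0) (.var 1)) oneTrm))
      else (idTrm, idTrm)
  | _, .const _ => (idTrm, idTrm)
  | k, .arr C D =>
      if tyFreeInB k (.arr C D) then
        (.lam (.lam (.app (liftTrm 2 0 (TTpair k D).1)
            (.app (.var 1) (.app (liftTrm 2 0 (TTpair k C).2) (.var 0))))),
         .lam (.lam (.app (liftTrm 2 0 (TTpair k D).2)
            (.app (.var 1) (.app (liftTrm 2 0 (TTpair k C).1) (.var 0))))))
      else (idTrm, idTrm)
  | k, .all B =>
      if tyFreeInB k (.all B) then
        (.lam (.app (liftTrm 1 0 (TTpair (k + 1) B).1) (.var 0)),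
         .lam (.app (liftTrm 1 0 (TTpair (k + 1) B).2) (.var 0)))
      else (idTrm, idTrm)

/-! Part A : renamings and substitution algebra -/

/-- Lift a renaming under a binder. -/
def upr (ρ : ℕ → ℕ) : ℕ → ℕ
  | 0 => 0
  | n + 1 => ρ n + 1

/-- Renaming of a term. -/
def ren (ρ : ℕ → ℕ) : Trm → Trm
  | .var n => .var (ρ n)
  | .app a b => .app (ren ρ a) (ren ρ b)
  | .lam a => .lam (ren (upr ρ) a)

theorem upr_ext {ρ ρ' : ℕ → ℕ} (h : ∀ n, ρ n = ρ' n) : ∀ n, upr ρ n = upr ρ' n := by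
  intro n; cases n <;> simp [upr, h]

theorem ren_ext {ρ ρ' : ℕ → ℕ} (h : ∀ n, ρ n = ρ' n) : ∀ t, ren ρ t = ren ρ' t := by
  intro t
  induction t generalizing ρ ρ' with
  | var n => simp [ren, h]
  | app a b iha ihb => simp [ren, iha h, ihb h]
  | lam a ih => simp [ren, ih (upr_ext h)]

theorem ren_ren (ρ₁ ρ₂ : ℕ → ℕ) (t : Trm) :
    ren ρ₁ (ren ρ₂ t) = ren (fun n => ρ₁ (ρ₂ n)) t := by
  induction t generalizing ρ₁ ρ₂ with
  | var n => simp [ren]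
  | app a b iha ihb => simp [ren, iha, ihb]
  | lam a ih =>
    simp only [ren, ih]
    congr 1
    apply ren_ext
    intro n; cases n <;> simp [upr]

theorem ren_id (t : Trm) : ren (fun n => n) t = t := by
  induction t with
  | var n => simp [ren]
  | app a b iha ihb => simp [ren, iha, ihb]
  | lam a ih =>
    simp only [ren]
    rw [ren_ext (ρ' := fun n => n) (fun n => by cases n <;> simp [upr]) a, ih]

/-- The renaming corresponding to `liftTrm d j`. -/
def liftρ (d j : ℕ) : ℕ → ℕ := fun n => if n < j then n else n + d

set_option linter.unnecessarySeqFocus false in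
theorem lift_as_ren (d : ℕ) : ∀ (j : ℕ) (t : Trm), liftTrm d j t = ren (liftρ d j) t := by
  intro j t
  induction t generalizing j with
  | var n => simp [liftTrm, ren, liftρ]; split <;> simp
  | app a b iha ihb => simp [liftTrm, ren, iha, ihb]
  | lam a ih =>
    simp only [liftTrm, ren, ih]
    congr 1
    apply ren_ext
    intro n; cases n with
    | zero => simp [upr, liftρ]
    | succ m =>
      simp only [upr, liftρ]
      by_cases hm : m < j <;> simp [hm, Nat.succ_lt_succ_iff] <;> omega

theorem liftSub_ext {σ τ : ℕ → Trm} (h : ∀ n, σ n = τ n) : ∀ n, liftSub σ n = liftSub τ n := by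
  intro n; cases n <;> simp [liftSub, h]

theorem msubst_ext {σ τ : ℕ → Trm} (h : ∀ n, σ n = τ n) : ∀ t, msubst σ t = msubst τ t := by
  intro t
  induction t generalizing σ τ with
  | var n => simp [msubst, h]
  | app a b iha ihb => simp [msubst, iha h, ihb h]
  | lam a ih => simp [msubst, ih (liftSub_ext h)]

/-- The parallel substitution corresponding to `substTrm · k u`. -/
def sσ (k : ℕ) (u : Trm) : ℕ → Trm := fun n =>
  if n < k then .var n else if n = k then liftTrm k 0 u else .var (n - 1)

theorem ren_as_msubst (ρ : ℕ → ℕ) (t : Trm) : ren ρ t = msubst (fun n => .var (ρ n)) t := by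
  induction t generalizing ρ with
  | var n => simp [ren, msubst]
  | app a b iha ihb => simp [ren, msubst, iha, ihb]
  | lam a ih =>
    simp only [ren, msubst, ih]
    congr 1
    apply msubst_ext
    intro n
    cases n <;> simp [liftSub, upr, liftTrm]

theorem subst_as_msubst (u : Trm) : ∀ (k : ℕ) (t : Trm), substTrm t k u = msubst (sσ k u) t := by
  intro k t
  induction t generalizing k with
  | var n =>
    simp only [substTrm, msubst, sσ]
  | app a b iha ihb => simp [substTrm, msubst, iha, ihb]
  | lam a ih =>
    simp only [substTrm, msubst, ih]
    congr 1
    apply msubst_ext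
    intro n
    cases n with
    | zero => simp [liftSub, sσ]
    | succ m =>
      simp only [liftSub, sσ]
      by_cases h1 : m < k
      · simp [h1, Nat.succ_lt_succ_iff, h1, liftTrm]
      · by_cases h2 : m = k
        · subst h2
          simp [Nat.lt_irrefl, lift_as_ren, ren_ren]
          apply ren_ext
          intro n; simp [liftρ]; omega
        · have h3 : ¬ (m + 1 < k + 1) := by omega
          have h4 : ¬ (m + 1 = k + 1) := by omega
          simp [h1, h2, h3, h4, liftTrm]
          omega

theorem msubst_ren (σ : ℕ → Trm) (ρ : ℕ → ℕ) (t : Trm) :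
    msubst σ (ren ρ t) = msubst (fun n => σ (ρ n)) t := by
  induction t generalizing σ ρ with
  | var n => simp [ren, msubst]
  | app a b iha ihb => simp [ren, msubst, iha, ihb]
  | lam a ih =>
    simp only [ren, msubst, ih]
    congr 1
    apply msubst_ext
    intro n
    cases n <;> simp [liftSub, upr]

theorem ren_msubst (ρ : ℕ → ℕ) (σ : ℕ → Trm) (t : Trm) :
    ren ρ (msubst σ t) = msubst (fun n => ren ρ (σ n)) t := by
  induction t generalizing σ ρ with
  | var n => simp [ren, msubst]
  | app a b iha ihb => simp [ren, msubst, iha, ihb]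
  | lam a ih =>
    simp only [ren, msubst, ih]
    congr 1
    apply msubst_ext
    intro n
    cases n with
    | zero => simp [liftSub, ren, upr]
    | succ m =>
      simp only [liftSub, lift_as_ren, ren_ren]
      apply ren_ext
      intro n; simp [liftρ, upr]

theorem msubst_msubst (σ τ : ℕ → Trm) (t : Trm) :
    msubst σ (msubst τ t) = msubst (fun n => msubst σ (τ n)) t := by
  induction t generalizing σ τ with
  | var n => simp [msubst]
  | app a b iha ihb => simp [msubst, iha, ihb]
  | lam a ih =>
    simp only [msubst, ih]
    congr 1
    apply msubst_ext
    intro n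
    cases n with
    | zero => simp [liftSub, msubst]
    | succ m =>
      simp only [liftSub, lift_as_ren, ren_msubst, msubst_ren]
      apply msubst_ext
      intro n; simp [liftρ, liftSub, lift_as_ren]

theorem msubst_id (t : Trm) : msubst Trm.var t = t := by
  induction t with
  | var n => simp [msubst]
  | app a b iha ihb => simp [msubst, iha, ihb]
  | lam a ih =>
    simp only [msubst]
    rw [msubst_ext (τ := Trm.var) (fun n => by cases n <;> simp [liftSub, liftTrm]) a, ih]

/-- Cons of a term onto a parallel substitution. -/
def consSub (u : Trm) (σ : ℕ → Trm) : ℕ → Trm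
  | 0 => u
  | n + 1 => σ n

theorem lift_zero (j : ℕ) (t : Trm) : liftTrm 0 j t = t := by
  rw [lift_as_ren]
  rw [ren_ext (ρ' := fun n => n) (fun n => by simp [liftρ]) t, ren_id]

/-- β-reduction of an `msubst`-ed abstraction. -/
theorem beta_msubst (σ : ℕ → Trm) (t u : Trm) :
    substTrm (msubst (liftSub σ) t) 0 u = msubst (consSub u σ) t := by
  rw [subst_as_msubst, msubst_msubst]
  apply msubst_ext
  intro n
  cases n with
  | zero => simp [liftSub, msubst, sσ, lift_zero, consSub]
  | succ m =>
    simp only [liftSub, consSub, lift_as_ren, msubst_ren]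
    have : (fun n => sσ 0 u (liftρ 1 0 n)) = Trm.var := by
      funext n; simp [sσ, liftρ]
    rw [this, msubst_id]

/-- Renaming commutes with β-substitution at level 0. -/
theorem ren_subst0 (ρ : ℕ → ℕ) (b u : Trm) :
    ren ρ (substTrm b 0 u) = substTrm (ren (upr ρ) b) 0 (ren ρ u) := by
  rw [subst_as_msubst, subst_as_msubst, ren_msubst, msubst_ren]
  apply msubst_ext
  intro n
  cases n with
  | zero => simp [sσ, upr, lift_zero]
  | succ m => simp [sσ, upr, ren]

/-- The renaming `0 ↦ x, n+1 ↦ n`. -/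
def rvar (x : ℕ) : ℕ → ℕ
  | 0 => x
  | n + 1 => n

theorem subst_var_as_ren (x : ℕ) (b : Trm) : substTrm b 0 (.var x) = ren (rvar x) b := by
  rw [subst_as_msubst, ren_as_msubst]
  apply msubst_ext
  intro n
  cases n <;> simp [sσ, rvar, lift_zero]
/-! Part B : free variables and reduction lemmas -/

theorem ren_fv_fwd (ρ : ℕ → ℕ) (t : Trm) (j : ℕ) (h : FreeIn j t) :
    FreeIn (ρ j) (ren ρ t) := by
  induction t generalizing ρ j with
  | var n => simp [FreeIn, ren] at h ⊢; simp [h]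
  | app a b iha ihb =>
    simp [FreeIn, ren] at h ⊢
    rcases h with h | h
    · exact Or.inl (iha ρ j h)
    · exact Or.inr (ihb ρ j h)
  | lam a ih =>
    simp only [FreeIn, ren] at h ⊢
    have := ih (upr ρ) (j + 1) h
    simpa [upr] using this

theorem ren_fv_rev (ρ : ℕ → ℕ) (t : Trm) (k : ℕ) (h : FreeIn k (ren ρ t)) :
    ∃ j, FreeIn j t ∧ ρ j = k := by
  induction t generalizing ρ k with
  | var n => simp [FreeIn, ren] at h ⊢; exact h
  | app a b iha ihb =>
    simp only [FreeIn, ren] at h ⊢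
    rcases h with h | h
    · obtain ⟨j, hj, hk⟩ := iha ρ k h
      exact ⟨j, Or.inl hj, hk⟩
    · obtain ⟨j, hj, hk⟩ := ihb ρ k h
      exact ⟨j, Or.inr hj, hk⟩
  | lam a ih =>
    simp only [FreeIn, ren] at h ⊢
    obtain ⟨j, hj, hk⟩ := ih (upr ρ) (k + 1) h
    cases j with
    | zero => simp [upr] at hk
    | succ m =>
      simp only [upr] at hk
      exact ⟨m, hj, by omega⟩

theorem msubst_fv (σ : ℕ → Trm) (t : Trm) (k : ℕ) (h : FreeIn k (msubst σ t)) :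
    ∃ j, FreeIn j t ∧ FreeIn k (σ j) := by
  induction t generalizing σ k with
  | var n => exact ⟨n, by simp [FreeIn], h⟩
  | app a b iha ihb =>
    simp only [FreeIn, msubst] at h ⊢
    rcases h with h | h
    · obtain ⟨j, hj, hk⟩ := iha σ k h
      exact ⟨j, Or.inl hj, hk⟩
    · obtain ⟨j, hj, hk⟩ := ihb σ k h
      exact ⟨j, Or.inr hj, hk⟩
  | lam a ih =>
    simp only [FreeIn, msubst] at h ⊢
    obtain ⟨j, hj, hk⟩ := ih (liftSub σ) (k + 1) h
    cases j with
    | zero => simp [liftSub, FreeIn] at hk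
    | succ m =>
      simp only [liftSub, lift_as_ren] at hk
      obtain ⟨i, hi, hik⟩ := ren_fv_rev _ _ _ hk
      simp only [liftρ] at hik
      simp at hik
      exact ⟨m, hj, by rw [show k = i by omega]; exact hi⟩

theorem step_fv {t t' : Trm} (h : BetaStep t t') : ∀ k, FreeIn k t' → FreeIn k t := by
  induction h with
  | beta b u =>
    intro k hk
    rw [subst_as_msubst] at hk
    obtain ⟨j, hj, hkj⟩ := msubst_fv _ _ _ hk
    cases j with
    | zero =>
      simp only [sσ, lift_zero] at hkj
      simp at hkj
      exact Or.inr hkj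
    | succ m =>
      simp only [sσ] at hkj
      simp [FreeIn] at hkj
      subst hkj
      exact Or.inl hj
  | appL u _ ih =>
    intro k hk
    rcases hk with h | h
    · exact Or.inl (ih k h)
    · exact Or.inr h
  | appR t _ ih =>
    intro k hk
    rcases hk with h | h
    · exact Or.inl h
    · exact Or.inr (ih k h)
  | lam _ ih => intro k hk; exact ih (k + 1) hk

theorem red_fv {t t' : Trm} (h : BetaRed t t') : ∀ k, FreeIn k t' → FreeIn k t := by
  induction h with
  | refl => exact fun _ h => h
  | tail _ hstep ih => exact fun k hk => ih k (step_fv hstep k hk)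

theorem fv_bound (t : Trm) : ∃ m, ∀ k, m ≤ k → ¬ FreeIn k t := by
  induction t with
  | var n => exact ⟨n + 1, fun k hk => by simp [FreeIn]; omega⟩
  | app a b iha ihb =>
    obtain ⟨m1, h1⟩ := iha
    obtain ⟨m2, h2⟩ := ihb
    exact ⟨max m1 m2, fun k hk => by
      simp only [FreeIn]
      push_neg
      exact ⟨h1 k (le_trans (le_max_left _ _) hk), h2 k (le_trans (le_max_right _ _) hk)⟩⟩
  | lam a ih =>
    obtain ⟨m, h⟩ := ih
    exact ⟨m, fun k hk => h (k + 1) (by omega)⟩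

theorem whstep_beta {t u : Trm} (h : WHStep t u) : BetaStep t u := by
  induction h with
  | beta t u => exact BetaStep.beta t u
  | app u _ ih => exact BetaStep.appL u ih

theorem whred_betared {t u : Trm} (h : WHRed t u) : BetaRed t u := by
  induction h with
  | refl => exact Relation.ReflTransGen.refl
  | tail _ hstep ih => exact ih.tail (whstep_beta hstep)

theorem red_appL {t t' : Trm} (u : Trm) (h : BetaRed t t') :
    BetaRed (.app t u) (.app t' u) := by
  induction h with
  | refl => exact Relation.ReflTransGen.refl
  | tail _ hstep ih => exact ih.tail (BetaStep.appL u hstep)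

theorem red_appR (t : Trm) {u u' : Trm} (h : BetaRed u u') :
    BetaRed (.app t u) (.app t u') := by
  induction h with
  | refl => exact Relation.ReflTransGen.refl
  | tail _ hstep ih => exact ih.tail (BetaStep.appR t hstep)

theorem red_lam {t t' : Trm} (h : BetaRed t t') : BetaRed (.lam t) (.lam t') := by
  induction h with
  | refl => exact Relation.ReflTransGen.refl
  | tail _ hstep ih => exact ih.tail (BetaStep.lam hstep)

theorem whred_appL {t t' : Trm} (u : Trm) (h : WHRed t t') :
    WHRed (.app t u) (.app t' u) := by
  induction h with
  | refl => exact Relation.ReflTransGen.refl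
  | tail _ hstep ih => exact ih.tail (WHStep.app u hstep)

/-- Reflection of a β-step through a renaming. -/
theorem ren_step_reflect : ∀ {s r : Trm}, BetaStep s r → ∀ (ρ : ℕ → ℕ) (t : Trm),
    s = ren ρ t → ∃ t', BetaStep t t' ∧ r = ren ρ t' := by
  intro s r h
  induction h with
  | beta a u =>
    intro ρ t ht
    cases t with
    | var n => simp [ren] at ht
    | lam b => simp [ren] at ht
    | app t₁ t₂ =>
      simp only [ren] at ht
      obtain ⟨ht₁, ht₂⟩ := Trm.app.inj ht
      cases t₁ with
      | var n => simp [ren] at ht₁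
      | app a b => simp [ren] at ht₁
      | lam b =>
        simp only [ren] at ht₁
        obtain hb := (Trm.lam.inj ht₁)
        refine ⟨substTrm b 0 t₂, BetaStep.beta b t₂, ?_⟩
        rw [ren_subst0, ← hb, ← ht₂]
  | appL u hstep ih =>
    intro ρ t ht
    cases t with
    | var n => simp [ren] at ht
    | lam b => simp [ren] at ht
    | app t₁ t₂ =>
      simp only [ren] at ht
      obtain ⟨ht₁, ht₂⟩ := Trm.app.inj ht
      obtain ⟨t₁', hstep', hr⟩ := ih ρ t₁ ht₁
      exact ⟨.app t₁' t₂, BetaStep.appL t₂ hstep', by simp [ren, hr, ht₂]⟩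
  | appR tt hstep ih =>
    intro ρ t ht
    cases t with
    | var n => simp [ren] at ht
    | lam b => simp [ren] at ht
    | app t₁ t₂ =>
      simp only [ren] at ht
      obtain ⟨ht₁, ht₂⟩ := Trm.app.inj ht
      obtain ⟨t₂', hstep', hr⟩ := ih ρ t₂ ht₂
      exact ⟨.app t₁ t₂', BetaStep.appR t₁ hstep', by simp [ren, hr, ht₁]⟩
  | lam hstep ih =>
    intro ρ t ht
    cases t with
    | var n => simp [ren] at ht
    | app a b => simp [ren] at ht
    | lam b =>
      simp only [ren] at ht
      obtain hb := Trm.lam.inj ht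
      obtain ⟨b', hstep', hr⟩ := ih (upr ρ) b hb
      exact ⟨.lam b', BetaStep.lam hstep', by simp [ren, hr]⟩

theorem ren_red_reflect {ρ : ℕ → ℕ} {t r : Trm} (h : BetaRed (ren ρ t) r) :
    ∃ t', BetaRed t t' ∧ r = ren ρ t' := by
  generalize hs : ren ρ t = s at h
  induction h with
  | refl => exact ⟨t, Relation.ReflTransGen.refl, hs.symm⟩
  | tail _ hstep ih =>
    obtain ⟨t', hred, rfl⟩ := ih
    obtain ⟨t'', hstep', rfl⟩ := ren_step_reflect hstep ρ t' rfl
    exact ⟨t'', hred.tail hstep', rfl⟩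

/-- Decomposition of a reduction of `t (var x)`. -/
theorem app_var_decomp {t : Trm} {x : ℕ} {r : Trm}
    (h : BetaRed (.app t (.var x)) r) :
    (∃ t', BetaRed t t' ∧ r = .app t' (.var x)) ∨
    (∃ b, BetaRed t (.lam b) ∧ BetaRed (ren (rvar x) b) r) := by
  generalize hs : Trm.app t (.var x) = s at h
  induction h with
  | refl => exact Or.inl ⟨t, Relation.ReflTransGen.refl, hs.symm⟩
  | tail _ hstep ih =>
    rcases ih with ⟨t', hred, rfl⟩ | ⟨b, hred, hred2⟩
    · -- step from app t' (var x)
      cases hstep with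
      | beta b u =>
        -- t' = lam b, u = var x
        exact Or.inr ⟨b, hred, by rw [← subst_var_as_ren]; exact Relation.ReflTransGen.refl⟩
      | appL u hstep' =>
        exact Or.inl ⟨_, hred.tail hstep', rfl⟩
      | appR t hstep' => cases hstep'
    · exact Or.inr ⟨b, hred, hred2.tail hstep⟩
/-! Part C : semantics of types, adequacy -/

theorem consEnv_sat {G : Set Trm} {I : ℕ → Set Trm} (hG : Saturated G)
    (hI : ∀ n, Saturated (I n)) : ∀ n, Saturated (consEnv G I n) := by
  intro n; cases n with
  | zero => exact hG
  | succ m => exact hI m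

theorem satVal (C : ℕ → Set Trm) (hC : ∀ c, Saturated (C c)) :
    ∀ (A : Ty) (I : ℕ → Set Trm), (∀ n, Saturated (I n)) → Saturated (TyVal C A I) := by
  intro A
  induction A with
  | var n => intro I hI; exact hI n
  | const c => intro I hI; exact hC c
  | arr a b iha ihb =>
    intro I hI t u hred hu s hs
    exact ihb I hI _ _ (whred_appL s hred) (hu s hs)
  | all a ih =>
    intro I hI t u hred hu G hG
    exact ih (consEnv G I) (consEnv_sat hG hI) _ _ hred (hu G hG)

/-- Drop `d` interpretations starting at position `j`. -/
def unlift (d j : ℕ) (I : ℕ → Set Trm) : ℕ → Set Trm := fun n => if n < j then I n else I (n + d)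

theorem consEnv_unlift (d j : ℕ) (G : Set Trm) (I : ℕ → Set Trm) :
    unlift d (j + 1) (consEnv G I) = consEnv G (unlift d j I) := by
  funext n
  cases n with
  | zero => simp [unlift, consEnv]
  | succ m =>
    by_cases h : m < j
    · simp [unlift, consEnv, h, Nat.succ_lt_succ h]
    · have hd : m + 1 + d = (m + d) + 1 := by omega
      simp [unlift, consEnv, h, hd]

theorem tyVal_lift (C : ℕ → Set Trm) (d : ℕ) :
    ∀ (B : Ty) (j : ℕ) (I : ℕ → Set Trm),
      TyVal C (liftTy d j B) I = TyVal C B (unlift d j I) := by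
  intro B
  induction B with
  | var n =>
    intro j I
    by_cases h : n < j <;> simp [liftTy, h, TyVal, unlift]
  | const c => intro j I; simp [liftTy, TyVal]
  | arr a b iha ihb => intro j I; simp [liftTy, TyVal, iha, ihb]
  | all a ih =>
    intro j I
    show TyVal C (.all (liftTy d (j+1) a)) I = _
    simp only [TyVal, ih, consEnv_unlift]

/-- Insert an interpretation at position `k`. -/
def insEnv (k : ℕ) (G : Set Trm) (I : ℕ → Set Trm) : ℕ → Set Trm := fun n =>
  if n < k then I n else if n = k then G else I (n - 1)

theorem insEnv_zero (M : Set Trm) (I : ℕ → Set Trm) : insEnv 0 M I = consEnv M I := by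
  funext n
  cases n with
  | zero => simp [insEnv, consEnv]
  | succ m => simp [insEnv, consEnv]

theorem consEnv_insEnv (k : ℕ) (M G' : Set Trm) (I : ℕ → Set Trm) :
    insEnv (k + 1) M (consEnv G' I) = consEnv G' (insEnv k M I) := by
  funext n
  cases n with
  | zero => simp [insEnv, consEnv]
  | succ m =>
    by_cases h1 : m < k
    · simp [insEnv, consEnv, h1, Nat.succ_lt_succ h1]
    · by_cases h2 : m = k
      · subst h2; simp [insEnv, consEnv]
      · have h3 : ¬ m + 1 < k + 1 := by omega
        have h4 : ¬ m + 1 = k + 1 := by omega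
        cases m with
        | zero => omega
        | succ p => simp [insEnv, consEnv, h1, h2, h3, h4]

theorem tyVal_subst (C : ℕ → Set Trm) (G : Ty) :
    ∀ (A : Ty) (k : ℕ) (I : ℕ → Set Trm),
      TyVal C (substTy A k G) I
        = TyVal C A (insEnv k (TyVal C G (fun n => I (n + k))) I) := by
  intro A
  induction A with
  | var n =>
    intro k I
    by_cases h1 : n < k
    · simp [substTy, h1, TyVal, insEnv]
    · by_cases h2 : n = k
      · subst h2
        have hsub : substTy (Ty.var n) n G = liftTy n 0 G := by simp [substTy]
        rw [hsub, tyVal_lift]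
        have hu : unlift n 0 I = fun m => I (m + n) := by funext m; simp [unlift]
        rw [hu]
        simp [TyVal, insEnv]
      · simp [substTy, h1, h2, TyVal, insEnv]
  | const c => intro k I; simp [substTy, TyVal]
  | arr a b iha ihb => intro k I; simp [substTy, TyVal, iha, ihb]
  | all a ih =>
    intro k I
    show TyVal C (.all (substTy a (k+1) G)) I = _
    simp only [TyVal]
    ext t
    simp only [Set.mem_setOf_eq]
    refine forall_congr' fun G' => ?_
    refine imp_congr_right fun hG' => ?_
    rw [ih (k + 1) (consEnv G' I)]
    have henv : (fun n => consEnv G' I (n + (k + 1))) = fun n => I (n + k) := by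
      funext n
      show consEnv G' I ((n + k) + 1) = I (n + k)
      rfl
    rw [henv, consEnv_insEnv]

theorem adequacy {Γ : List Ty} {t : Trm} {A : Ty} (h : TypF Γ t A) :
    ∀ (C I : ℕ → Set Trm) (σ : ℕ → Trm), (∀ c, Saturated (C c)) → (∀ n, Saturated (I n)) →
    (∀ n B, Γ[n]? = some B → σ n ∈ TyVal C B I) → msubst σ t ∈ TyVal C A I := by
  induction h with
  | var Γ n A hA =>
    intro C I σ hC hI hσ
    exact hσ n A hA
  | @abs Γ t B C0 hB ih =>
    intro C I σ hC hI hσ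
    simp only [msubst, TyVal]
    intro u hu
    have hmem : msubst (consSub u σ) t ∈ TyVal C C0 I := by
      apply ih C I (consSub u σ) hC hI
      intro n B' hB'
      cases n with
      | zero =>
        simp at hB'
        subst hB'
        exact hu
      | succ m =>
        simp at hB'
        exact hσ m B' hB'
    have hstep : WHRed (.app (.lam (msubst (liftSub σ) t)) u)
        (substTrm (msubst (liftSub σ) t) 0 u) :=
      Relation.ReflTransGen.single (WHStep.beta _ _)
    rw [beta_msubst] at hstep
    exact satVal C hC C0 I hI _ _ hstep hmem
  | @app Γ u v B C0 hu hv ihu ihv =>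
    intro C I σ hC hI hσ
    exact ihu C I σ hC hI hσ _ (ihv C I σ hC hI hσ)
  | @allI Γ t A h ih =>
    intro C I σ hC hI hσ
    intro G hG
    apply ih C (consEnv G I) σ hC (consEnv_sat hG hI)
    intro n B hB
    rw [List.getElem?_map] at hB
    cases hΓ : Γ[n]? with
    | none => rw [hΓ] at hB; simp at hB
    | some B0 =>
      rw [hΓ] at hB
      simp only [Option.map_some] at hB
      obtain rfl := Option.some.inj hB
      rw [tyVal_lift]
      have hen : unlift 1 0 (consEnv G I) = I := by
        funext m; simp [unlift, consEnv]
      rw [hen]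
      exact hσ n B0 hΓ
  | @allE Γ t A G h ih =>
    intro C I σ hC hI hσ
    rw [tyVal_subst, insEnv_zero]
    have hall := ih C I σ hC hI hσ
    exact hall (TyVal C G fun n => I (n + 0)) (satVal C hC G _ hI)

theorem typed_in_global {t : Trm} {A : Ty} (h : TypF [] t A) : t ∈ TyGlobal A := by
  intro C I hC hI
  have := adequacy h C I Trm.var hC hI (fun n B hB => by simp at hB)
  rwa [msubst_id] at this
/-! Part D : positive types are data types -/

/-- Terms β-reducing to a term whose only possible free variable is `x`. -/
def NP (x : ℕ) : Set Trm := {t | ∃ t', BetaRed t t' ∧ ∀ k, FreeIn k t' → k = x}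

/-- Head forms `(x)u₁…uₙ` with all free variables equal to `x`. -/
inductive Hd (x : ℕ) : Trm → Prop
  | base : Hd x (.var x)
  | app {h : Trm} (u : Trm) : Hd x h → (∀ k, FreeIn k u → k = x) → Hd x (.app h u)

/-- Terms β-reducing to a head form. -/
def NN (x : ℕ) : Set Trm := {t | ∃ h, BetaRed t h ∧ Hd x h}

theorem hd_fv {x : ℕ} {h : Trm} (hh : Hd x h) : ∀ k, FreeIn k h → k = x := by
  induction hh with
  | base => intro k hk; exact hk.symm
  | app u _ hu ih =>
    intro k hk
    rcases hk with hk | hk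
    · exact ih k hk
    · exact hu k hk

theorem NP_sat (x : ℕ) : Saturated (NP x) := by
  rintro t u hred ⟨t', h1, h2⟩
  exact ⟨t', (whred_betared hred).trans h1, h2⟩

theorem NN_in_NP {x : ℕ} {t : Trm} (h : t ∈ NN x) : t ∈ NP x := by
  obtain ⟨h', hred, hd⟩ := h
  exact ⟨h', hred, hd_fv hd⟩

theorem posneg (C : ℕ → Set Trm) (x : ℕ) : ∀ A : Ty,
    (PosTy A → TyVal C A (fun _ => NP x) ⊆ NP x) ∧
    (NegTy A → NN x ⊆ TyVal C A (fun _ => NP x)) := by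
  intro A
  induction A with
  | var n =>
    constructor
    · intro _ t ht; exact ht
    · intro _ t ht; exact NN_in_NP ht
  | const c =>
    constructor
    · intro h; cases h
    · intro h; cases h
  | arr B A ihB ihA =>
    constructor
    · intro hp
      cases hp with
      | arr hB hA =>
        intro t ht
        have hx : Trm.var x ∈ TyVal C B (fun _ => NP x) :=
          ihB.2 hB ⟨_, Relation.ReflTransGen.refl, Hd.base⟩
        have happ : Trm.app t (Trm.var x) ∈ NP x := ihA.1 hA (ht _ hx)
        obtain ⟨r, hred, hfv⟩ := happ
        rcases app_var_decomp hred with ⟨t', hred', rfl⟩ | ⟨b, hredb, hred2⟩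
        · exact ⟨t', hred', fun k hk => hfv k (Or.inl hk)⟩
        · obtain ⟨b', hb', rfl⟩ := ren_red_reflect hred2
          refine ⟨.lam b', hredb.trans (red_lam hb'), ?_⟩
          intro k hk
          have hk' : FreeIn (k + 1) b' := hk
          have hfw := ren_fv_fwd (rvar x) b' (k + 1) hk'
          exact hfv k hfw
    · intro hn
      cases hn with
      | arr hB hA =>
        intro t ht u hu
        have hu' : u ∈ NP x := ihB.1 hB hu
        obtain ⟨h, hth, hdh⟩ := ht
        obtain ⟨u', huu, hufv⟩ := hu'
        apply ihA.2 hA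
        exact ⟨.app h u', (red_appL u hth).trans (red_appR h huu), Hd.app u' hdh hufv⟩
  | all A ih =>
    constructor
    · intro hp
      cases hp with
      | all hA hfree =>
        intro t ht
        have hmem := ht (NP x) (NP_sat x)
        have henv : consEnv (NP x) (fun _ => NP x) = (fun _ => NP x) := by
          funext n; cases n <;> rfl
        rw [henv] at hmem
        exact ih.1 hA hmem
    · intro hn; cases hn
/-- a closed, provable ∀⁺ type of system F is a data type :
`|A| ≠ ∅` and every term of `|A|` β-reduces to a closed term. -/
theorem pos_provable_is_data_type (A : Ty) (hA : PosTy A) (hC : TyClosed A)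
    (hprov : ∃ t : Trm, TrmClosed t ∧ TypF [] t A) : IsDataType A := by
  obtain ⟨t₀, _, ht₀⟩ := hprov
  refine ⟨hC, ?_, ?_⟩
  · intro hempty
    exact absurd (hempty ▸ typed_in_global ht₀) (Set.notMem_empty t₀)
  · intro t ht
    obtain ⟨m, hm⟩ := fv_bound t
    have hmem : t ∈ TyVal (fun _ => NP m) A (fun _ => NP m) :=
      ht _ _ (fun _ => NP_sat m) (fun _ => NP_sat m)
    obtain ⟨t', hred, hfv⟩ := (posneg (fun _ => NP m) m A).1 hA hmem
    refine ⟨t', hred, ?_⟩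
    intro k hk
    have hkx := hfv k hk
    exact hm k (le_of_eq hkx.symm) (red_fv hred k hk)

end FarkhNour
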